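/- arXiv:2012.01986 — 4 statements merged into one kernel-verified Lean document; each statement's English description precedes it below -/
import Mathlib

section
/- Let N, R ≥ 1 be integers. For every signal x : ZMod N → ℝ and every family of patch-domain vectors w : ZMod N → (Fin R → ℝ), the reconstruction error of the patch-averaged estimate is bounded by the average patch-wise error: ∑_{t ∈ ZMod N} ( x_t − (1/R) ∑_{j ∈ ZMod N} (P_jᵀ w_j)_t )² ≤ (1/R) ∑_{j ∈ ZMod N} ∑_{r < R} ( (P_j x)_r − w_j r )². -/
open Matrix

noncomputable def patchMat (N R : ℕ) (j : ZMod N) : Matrix (Fin R) (ZMod N) ℝ :=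
  Matrix.of fun r t => if t = j + ((r : ℕ) : ZMod N) then 1 else 0

lemma patch_apply (N R : ℕ) [NeZero N] (j : ZMod N) (x : ZMod N → ℝ) (r : Fin R) :
    (patchMat N R j).mulVec x r = x (j + ((r : ℕ) : ZMod N)) := by
  simp [patchMat, Matrix.mulVec, dotProduct, ite_mul]

lemma patchT_apply (N R : ℕ) [NeZero N] (j : ZMod N) (v : Fin R → ℝ) (t : ZMod N) :
    (patchMat N R j)ᵀ.mulVec v t = ∑ r : Fin R, if j = t - ((r : ℕ) : ZMod N) then v r else 0 := by
  simp only [patchMat, Matrix.mulVec, Matrix.transpose_apply, dotProduct, Matrix.of_apply,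
    ite_mul, one_mul, zero_mul]
  congr 1; ext r
  congr 1
  simp only [eq_iff_iff]
  constructor <;> intro h <;> [exact (by rw [h]; ring); (rw [h]; ring)]

/-- The reconstruction error of the patch-averaged estimate is bounded by the
average patch-wise error. -/
theorem patch_average_error_le (N R : ℕ) [NeZero N] (hR : 1 ≤ R)
    (x : ZMod N → ℝ) (w : ZMod N → Fin R → ℝ) :
    ∑ t : ZMod N,
        (x t - (1 / (R : ℝ)) * ∑ j : ZMod N, (patchMat N R j)ᵀ.mulVec (w j) t) ^ 2
      ≤ (1 / (R : ℝ)) * ∑ j : ZMod N, ∑ r : Fin R,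
          ((patchMat N R j).mulVec x r - w j r) ^ 2 := by
  have hRpos : (0:ℝ) < R := by exact_mod_cast hR
  -- rewrite inner sums
  have hsum : ∀ t : ZMod N, ∑ j : ZMod N, (patchMat N R j)ᵀ.mulVec (w j) t
      = ∑ r : Fin R, w (t - ((r : ℕ) : ZMod N)) r := by
    intro t
    simp only [patchT_apply]
    rw [Finset.sum_comm]
    congr 1; ext r
    simp
  have key : ∀ t : ZMod N,
      (x t - (1 / (R : ℝ)) * ∑ j : ZMod N, (patchMat N R j)ᵀ.mulVec (w j) t) ^ 2
        ≤ (1 / (R : ℝ)) * ∑ r : Fin R, (x t - w (t - ((r : ℕ) : ZMod N)) r) ^ 2 := by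
    intro t
    rw [hsum]
    have h1 : x t - (1 / (R : ℝ)) * ∑ r : Fin R, w (t - ((r : ℕ) : ZMod N)) r
        = (1 / (R : ℝ)) * ∑ r : Fin R, (x t - w (t - ((r : ℕ) : ZMod N)) r) := by
      rw [Finset.sum_sub_distrib, Finset.sum_const, Finset.card_univ, Fintype.card_fin]
      field_simp
      ring
    rw [h1, mul_pow]
    have hcs := sq_sum_le_card_mul_sum_sq (s := (Finset.univ : Finset (Fin R)))
      (f := fun r => x t - w (t - ((r : ℕ) : ZMod N)) r)
    rw [Finset.card_univ, Fintype.card_fin] at hcs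
    have : (1 / (R : ℝ)) ^ 2 * (∑ r : Fin R, (x t - w (t - ((r : ℕ) : ZMod N)) r)) ^ 2
        ≤ (1 / (R : ℝ)) ^ 2 * ((R : ℝ) * ∑ r : Fin R, (x t - w (t - ((r : ℕ) : ZMod N)) r) ^ 2) := by
      apply mul_le_mul_of_nonneg_left _ (by positivity)
      exact_mod_cast hcs
    calc (1 / (R : ℝ)) ^ 2 * (∑ r : Fin R, (x t - w (t - ((r : ℕ) : ZMod N)) r)) ^ 2
        ≤ (1 / (R : ℝ)) ^ 2 * ((R : ℝ) * ∑ r : Fin R, (x t - w (t - ((r : ℕ) : ZMod N)) r) ^ 2) := this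
      _ = (1 / (R : ℝ)) * ∑ r : Fin R, (x t - w (t - ((r : ℕ) : ZMod N)) r) ^ 2 := by
          field_simp
  calc ∑ t : ZMod N, (x t - (1 / (R : ℝ)) * ∑ j : ZMod N, (patchMat N R j)ᵀ.mulVec (w j) t) ^ 2
      ≤ ∑ t : ZMod N, (1 / (R : ℝ)) * ∑ r : Fin R, (x t - w (t - ((r : ℕ) : ZMod N)) r) ^ 2 :=
        Finset.sum_le_sum fun t _ => key t
    _ = (1 / (R : ℝ)) * ∑ t : ZMod N, ∑ r : Fin R, (x t - w (t - ((r : ℕ) : ZMod N)) r) ^ 2 := by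
        rw [Finset.mul_sum]
    _ = (1 / (R : ℝ)) * ∑ j : ZMod N, ∑ r : Fin R,
          ((patchMat N R j).mulVec x r - w j r) ^ 2 := by
        congr 1
        rw [Finset.sum_comm]
        conv_rhs => rw [Finset.sum_comm]
        refine Finset.sum_congr rfl fun r _ => ?_
        refine Fintype.sum_equiv (Equiv.subRight ((r : ℕ) : ZMod N)) _ _ fun t => ?_
        simp [patch_apply, Equiv.subRight, sub_add_cancel]
end

section
/- Let N, R, K ≥ 1 be integers, let e : Fin K → (Fin R → ℝ) be a family of K filters, and let u : ZMod N → ℝ. Then the sum over filters of the adjoint circular convolution of each filter with its circular correlation with u equals the patch-domain operator: for every t ∈ ZMod N, ∑_{k < K} (e_k ⋆* (e_k ⋆ u))_t = ∑_{j ∈ ZMod N} ( P_jᵀ ( Eᵀ ( E (P_j u) ) ) )_t, where E ∈ Matrix (Fin K) (Fin R) ℝ has entries E_{k,r} = e_k r. -/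
open Matrix

/-- Circular correlation: `(e ⋆ x)_j = ∑_r e_r x_{j+r}`. -/
noncomputable def circCorr (N R : ℕ) (e : Fin R → ℝ) (x : ZMod N → ℝ) : ZMod N → ℝ :=
  fun j => ∑ r : Fin R, e r * x (j + ((r : ℕ) : ZMod N))

/-- Adjoint circular convolution: `(e ⋆* v)_t = ∑_r e_r v_{t-r}`. -/
noncomputable def circAdj (N R : ℕ) (e : Fin R → ℝ) (v : ZMod N → ℝ) : ZMod N → ℝ :=
  fun t => ∑ r : Fin R, e r * v (t - ((r : ℕ) : ZMod N))

/-- Convolution-to-patch reformulation: `∑_k ē_k ∗ (e_k ∗ u) = ∑_j P_jᵀ Eᵀ E P_j u`. -/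
theorem conv_adjoint_corr_eq_patch (N R K : ℕ) [NeZero N] (hR : 1 ≤ R) (hK : 1 ≤ K)
    (e : Fin K → Fin R → ℝ) (u : ZMod N → ℝ) :
    ∀ t : ZMod N,
      (∑ k : Fin K, circAdj N R (e k) (circCorr N R (e k) u) t)
        = ∑ j : ZMod N,
            (patchMat N R j)ᵀ.mulVec
              ((Matrix.of e : Matrix (Fin K) (Fin R) ℝ)ᵀ.mulVec
                ((Matrix.of e : Matrix (Fin K) (Fin R) ℝ).mulVec
                  ((patchMat N R j).mulVec u))) t := by
  intro t
  simp only [circAdj, circCorr, patchMat, mulVec, dotProduct, transpose_apply, of_apply,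
    ite_mul, one_mul, zero_mul, mul_ite, mul_one, mul_zero, Finset.sum_ite_eq,
    Finset.mem_univ, if_true]
  have key : ∀ (r : Fin R) (j : ZMod N),
      (t = j + ((r : ℕ) : ZMod N)) ↔ (j = t - ((r : ℕ) : ZMod N)) := by
    intro r j
    constructor
    · intro h; rw [h]; ring
    · intro h; rw [h]; ring
  calc ∑ k : Fin K, ∑ r : Fin R, e k r *
          ∑ s : Fin R, e k s * u (t - ((r : ℕ) : ZMod N) + ((s : ℕ) : ZMod N))
      = ∑ r : Fin R, ∑ j : ZMod N, (if j = t - ((r : ℕ) : ZMod N) then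
          ∑ k : Fin K, e k r * ∑ s : Fin R, e k s * u (j + ((s : ℕ) : ZMod N)) else 0) := by
        rw [Finset.sum_comm]
        refine Finset.sum_congr rfl fun r _ => ?_
        rw [Finset.sum_ite_eq' Finset.univ _ _, if_pos (Finset.mem_univ _)]
    _ = ∑ j : ZMod N, ∑ r : Fin R, (if t = j + ((r : ℕ) : ZMod N) then
          ∑ k : Fin K, e k r * ∑ s : Fin R, e k s * u (j + ((s : ℕ) : ZMod N)) else 0) := by
        rw [Finset.sum_comm]
        refine Finset.sum_congr rfl fun j _ => Finset.sum_congr rfl fun r _ => ?_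
        exact if_congr (key r j).symm rfl rfl
    _ = _ := by
        refine Finset.sum_congr rfl fun j _ => Finset.sum_congr rfl fun r _ => ?_
        split_ifs with h
        · refine Finset.sum_congr rfl fun k _ => ?_
          congr 1
          refine Finset.sum_congr rfl fun s _ => ?_
          rw [Finset.sum_ite_eq' Finset.univ _ u, if_pos (Finset.mem_univ _)]
        · rfl
end

section
/- (Proposition S.2, training-loss bound for the distinct cross-material refiner.) Let N, R, K, L ≥ 1 be integers. For m, n ∈ Fin 2 let D_{m,n} ∈ Matrix (Fin R) (Fin K) ℝ and E_{n,m} ∈ Matrix (Fin K) (Fin R) ℝ, let α : Fin 2 → Fin K → ℝ, and for each l ∈ Fin L and m ∈ Fin 2 let x_{l,m} : ZMod N → ℝ (high-quality images) and y_{l,m} : ZMod N → ℝ (degraded images). For each l, j, n define the refined patch coefficient z_{l,j,n} : Fin K → ℝ by z_{l,j,n}(k) = T_{exp(α n k)}( ∑_{m' ∈ Fin 2} (E_{n,m'} (P_j y_{l,m'}))_k ), and the refined patch w_{l,j,m} : Fin R → ℝ by w_{l,j,m} = ∑_{n ∈ Fin 2} D_{m,n} z_{l,j,n}. Then (1/(2L))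 ∑_{l < L} ∑_{m ∈ Fin 2} ∑_{t ∈ ZMod N} ( x_{l,m}(t) − (1/R) ∑_{j ∈ ZMod N} (P_jᵀ w_{l,j,m})_t )² ≤ (1/(2LR)) ∑_{l < L} ∑_{j ∈ ZMod N} ∑_{m ∈ Fin 2} ∑_{r < R} ( (P_j x_{l,m})_r − w_{l,j,m}(r) )². That is, the image-domain loss of the patch-averaged distinct cross-material CNN refiner is bounded by its patch-based training loss. -/
open Matrix

/-- Soft-thresholding: `T_a(t) = sign(t) · max(|t| - a, 0)`. -/
noncomputable def softT (a t : ℝ) : ℝ := Real.sign t * max (|t| - a) 0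

lemma key (N R : ℕ) [NeZero N] (hR : 1 ≤ R) (x : ZMod N → ℝ) (w : ZMod N → Fin R → ℝ) :
    ∑ t : ZMod N, (x t - (1/(R:ℝ)) * ∑ j : ZMod N, (patchMat N R j)ᵀ.mulVec (w j) t)^2
      ≤ (1/(R:ℝ)) * ∑ j : ZMod N, ∑ r : Fin R, ((patchMat N R j).mulVec x r - w j r)^2 := by
  have hRpos : (0:ℝ) < R := by exact_mod_cast hR
  -- indicator
  set c : ZMod N → ZMod N × Fin R → ℝ :=
    fun t p => if t = p.1 + ((p.2 : ℕ) : ZMod N) then 1 else 0 with hc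
  have hcount : ∀ t, ∑ p : ZMod N × Fin R, c t p = (R:ℝ) := by
    intro t
    rw [Fintype.sum_prod_type_right]
    have : ∀ r : Fin R, ∑ j : ZMod N, c t (j, r) = 1 := by
      intro r
      have : ∀ j : ZMod N, c t (j, r) = if j = t - ((r:ℕ):ZMod N) then 1 else 0 := by
        intro j
        simp only [hc]
        congr 1
        simp only [eq_iff_iff]
        constructor
        · intro h; rw [h]; ring
        · intro h; rw [h]; ring
      simp [this]
    simp [this]
  have hsum_t : ∀ p : ZMod N × Fin R, ∀ v : ℝ, ∑ t : ZMod N, c t p * v = v := by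
    intro p v
    simp [hc, ite_mul]
  -- the deviation d
  set d : ZMod N × Fin R → ℝ :=
    fun p => x (p.1 + ((p.2 : ℕ) : ZMod N)) - w p.1 p.2 with hd
  have hmain : ∀ t : ZMod N,
      x t - (1/(R:ℝ)) * ∑ j : ZMod N, (patchMat N R j)ᵀ.mulVec (w j) t
        = (1/(R:ℝ)) * ∑ p : ZMod N × Fin R, c t p * d p := by
    intro t
    have h1 : ∑ j : ZMod N, (patchMat N R j)ᵀ.mulVec (w j) t
        = ∑ p : ZMod N × Fin R, c t p * w p.1 p.2 := by
      rw [Fintype.sum_prod_type]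
      refine Finset.sum_congr rfl fun j _ => ?_
      simp [patchMat, Matrix.mulVec, Matrix.transpose, dotProduct, hc, ite_mul]
    have h2 : x t = (1/(R:ℝ)) * ∑ p : ZMod N × Fin R, c t p * x t := by
      rw [← Finset.sum_mul, hcount]
      field_simp
    rw [h1, h2]
    rw [← mul_sub, ← Finset.sum_sub_distrib]
    congr 1
    refine Finset.sum_congr rfl fun p _ => ?_
    rw [← mul_sub]
    simp only [hc, hd]
    by_cases h : t = p.1 + ((p.2 : ℕ) : ZMod N)
    · simp [h]
    · simp [h]
  have hstep : ∀ t : ZMod N,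
      (x t - (1/(R:ℝ)) * ∑ j : ZMod N, (patchMat N R j)ᵀ.mulVec (w j) t)^2
        ≤ (1/(R:ℝ)) * ∑ p : ZMod N × Fin R, c t p * (d p)^2 := by
    intro t
    rw [hmain t, mul_pow]
    have cs := Finset.sum_mul_sq_le_sq_mul_sq Finset.univ (fun p => c t p) (fun p => c t p * d p)
    have hcc : ∀ p, c t p * (c t p * d p) = c t p * d p := by
      intro p; simp only [hc]; by_cases h : t = p.1 + ((p.2:ℕ):ZMod N) <;> simp [h]
    have hsq : ∀ p, (c t p)^2 = c t p := by
      intro p; simp only [hc]; by_cases h : t = p.1 + ((p.2:ℕ):ZMod N) <;> simp [h]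
    have hsq2 : ∀ p, (c t p * d p)^2 = c t p * (d p)^2 := by
      intro p; simp only [hc]; by_cases h : t = p.1 + ((p.2:ℕ):ZMod N) <;> simp [h, mul_pow]
    simp only [hcc, hsq, hsq2, hcount] at cs
    calc ((1:ℝ)/R)^2 * (∑ p : ZMod N × Fin R, c t p * d p)^2
        ≤ ((1:ℝ)/R)^2 * ((R:ℝ) * ∑ p : ZMod N × Fin R, c t p * (d p)^2) := by
          apply mul_le_mul_of_nonneg_left cs (by positivity)
      _ = (1/(R:ℝ)) * ∑ p : ZMod N × Fin R, c t p * (d p)^2 := by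
          field_simp
  calc ∑ t : ZMod N, (x t - (1/(R:ℝ)) * ∑ j : ZMod N, (patchMat N R j)ᵀ.mulVec (w j) t)^2
      ≤ ∑ t : ZMod N, (1/(R:ℝ)) * ∑ p : ZMod N × Fin R, c t p * (d p)^2 :=
        Finset.sum_le_sum fun t _ => hstep t
    _ = (1/(R:ℝ)) * ∑ p : ZMod N × Fin R, ∑ t : ZMod N, c t p * (d p)^2 := by
        rw [← Finset.mul_sum, Finset.sum_comm]
    _ = (1/(R:ℝ)) * ∑ p : ZMod N × Fin R, (d p)^2 := by
        congr 1; exact Finset.sum_congr rfl fun p _ => hsum_t p _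
    _ = (1/(R:ℝ)) * ∑ j : ZMod N, ∑ r : Fin R, ((patchMat N R j).mulVec x r - w j r)^2 := by
        rw [Fintype.sum_prod_type]
        congr 1
        refine Finset.sum_congr rfl fun j _ => Finset.sum_congr rfl fun r _ => ?_
        simp [hd, patchMat, Matrix.mulVec, dotProduct, ite_mul]


/-- Proposition S.2: the image-domain loss of the patch-averaged distinct
cross-material CNN refiner is bounded by its patch-based training loss. -/
theorem distinct_cross_material_loss_le_patch_loss (N R K L : ℕ) [NeZero N]
    (hR : 1 ≤ R) (hK : 1 ≤ K) (hL : 1 ≤ L)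
    (D : Fin 2 → Fin 2 → Matrix (Fin R) (Fin K) ℝ)
    (E : Fin 2 → Fin 2 → Matrix (Fin K) (Fin R) ℝ)
    (α : Fin 2 → Fin K → ℝ)
    (x y : Fin L → Fin 2 → ZMod N → ℝ)
    (z : Fin L → ZMod N → Fin 2 → Fin K → ℝ)
    (w : Fin L → ZMod N → Fin 2 → Fin R → ℝ)
    (hz : ∀ (l : Fin L) (j : ZMod N) (n : Fin 2) (k : Fin K),
      z l j n k = softT (Real.exp (α n k))
        (∑ m' : Fin 2, (E n m').mulVec ((patchMat N R j).mulVec (y l m')) k))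
    (hw : ∀ (l : Fin L) (j : ZMod N) (m : Fin 2),
      w l j m = ∑ n : Fin 2, (D m n).mulVec (z l j n)) :
    (1 / (2 * (L : ℝ))) * ∑ l : Fin L, ∑ m : Fin 2, ∑ t : ZMod N,
        (x l m t
          - (1 / (R : ℝ)) * ∑ j : ZMod N, (patchMat N R j)ᵀ.mulVec (w l j m) t) ^ 2
      ≤ (1 / (2 * (L : ℝ) * (R : ℝ))) * ∑ l : Fin L, ∑ j : ZMod N, ∑ m : Fin 2,
          ∑ r : Fin R, ((patchMat N R j).mulVec (x l m) r - w l j m r) ^ 2 := by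
  have hLpos : (0:ℝ) < L := by exact_mod_cast hL
  calc (1 / (2 * (L : ℝ))) * ∑ l : Fin L, ∑ m : Fin 2, ∑ t : ZMod N,
        (x l m t - (1 / (R : ℝ)) * ∑ j : ZMod N, (patchMat N R j)ᵀ.mulVec (w l j m) t) ^ 2
      ≤ (1 / (2 * (L : ℝ))) * ∑ l : Fin L, ∑ m : Fin 2, ((1/(R:ℝ)) *
          ∑ j : ZMod N, ∑ r : Fin R, ((patchMat N R j).mulVec (x l m) r - w l j m r) ^ 2) := by
        apply mul_le_mul_of_nonneg_left _ (by positivity)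
        refine Finset.sum_le_sum fun l _ => Finset.sum_le_sum fun m _ => ?_
        exact key N R hR (x l m) (fun j => w l j m)
    _ = (1 / (2 * (L : ℝ) * (R : ℝ))) * ∑ l : Fin L, ∑ m : Fin 2,
          ∑ j : ZMod N, ∑ r : Fin R, ((patchMat N R j).mulVec (x l m) r - w l j m r) ^ 2 := by
        simp only [← Finset.mul_sum]
        ring
    _ = (1 / (2 * (L : ℝ) * (R : ℝ))) * ∑ l : Fin L, ∑ j : ZMod N, ∑ m : Fin 2,
          ∑ r : Fin R, ((patchMat N R j).mulVec (x l m) r - w l j m r) ^ 2 := by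
        congr 1
        exact Finset.sum_congr rfl fun l _ => Finset.sum_comm
end

section
/- Let B, n, q ≥ 1, let X, Y ∈ Matrix (Fin n) (Fin B) ℝ, D ∈ Matrix (Fin n) (Fin q) ℝ, and E ∈ Matrix (Fin q) (Fin n) ℝ be fixed, and let α : Fin q → ℝ satisfy the nondegeneracy condition |(E·Y)_{k,b}| ≠ Real.exp(α k) for all k, b. Define Z_{k,b} = Real.sign((E·Y)_{k,b}) · max(|(E·Y)_{k,b}| − exp(α k), 0) and the loss L(a) = (1/B) ∑_{r,b} ( X_{r,b} − ∑_k D_{r,k} · Real.sign((E·Y)_{k,b}) · max(|(E·Y)_{k,b}| − exp(a k), 0) )² for a : Fin q → ℝ. Then L is differentiable at α with Fréchet derivative h ↦ ∑_{k < q} g_k · h_k, where g_k = (2/B) ∑_{b < B} ( Dᵀ·(X − D·Z) )_{k,b} · exp(α k) · Real.sign(Z_{k,b}). That is, ∂L/∂α = (2/B) { Dᵀ(X − DZ) ⊙ exp(α 1ᵀ) ⊙ sign(Z) } 1. -/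
/-!
Away from its kinks `|u| = τ`, soft-thresholding is locally either `0` or `sign u * (|u| - τ)`,
so its derivative in the threshold is `-sign (T_τ u)`; the chain rule through `τ = exp α_k`
multiplies this by `exp α_k`. Each code entry `Z k b` depends on the single exponent `α k`, so the
chain rule through the squared residual `‖X - D Z‖²` gives the `k`-th partial derivative
`-2 ∑_b (Dᵀ (X - D Z))_{kb} ∂_{α_k} Z_{kb}`.
-/

open Matrix

noncomputable def softThreshold (τ u : ℝ) : ℝ := Real.sign u * max (|u| - τ) 0

theorem softThreshold_of_abs_le {τ u : ℝ} (h : |u| ≤ τ) : softThreshold τ u = 0 := by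
  rw [softThreshold, max_eq_right (sub_nonpos.2 h), mul_zero]

theorem softThreshold_of_le_abs {τ u : ℝ} (h : τ ≤ |u|) :
    softThreshold τ u = Real.sign u * (|u| - τ) := by
  rw [softThreshold, max_eq_left (sub_nonneg.2 h)]

theorem Real.sign_sign_mul_of_pos (u : ℝ) {p : ℝ} (hp : 0 < p) :
    Real.sign (Real.sign u * p) = Real.sign u := by
  rcases lt_trichotomy u 0 with hu | rfl | hu
  · rw [Real.sign_of_neg hu, neg_one_mul, Real.sign_neg, Real.sign_of_pos hp]
  · rw [Real.sign_zero, zero_mul, Real.sign_zero]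
  · rw [Real.sign_of_pos hu, one_mul, Real.sign_of_pos hp]

theorem hasDerivAt_softThreshold_threshold {τ u : ℝ} (h : |u| ≠ τ) :
    HasDerivAt (fun t => softThreshold t u) (-Real.sign (softThreshold τ u)) τ := by
  rcases h.lt_or_gt with hlt | hgt
  · have hzero : (fun t => softThreshold t u) =ᶠ[nhds τ] fun _ => 0 :=
      (eventually_gt_nhds hlt).mono fun t ht => softThreshold_of_abs_le ht.le
    rw [softThreshold_of_abs_le hlt.le, Real.sign_zero, neg_zero]
    exact (hasDerivAt_const τ 0).congr_of_eventuallyEq hzero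
  · have hlin : (fun t => softThreshold t u) =ᶠ[nhds τ] fun t => Real.sign u * (|u| - t) :=
      (eventually_lt_nhds hgt).mono fun t ht => softThreshold_of_le_abs ht.le
    rw [softThreshold_of_le_abs hgt.le, Real.sign_sign_mul_of_pos u (sub_pos.2 hgt),
      ← mul_neg_one]
    exact (((hasDerivAt_id τ).const_sub |u|).const_mul (Real.sign u)).congr_of_eventuallyEq hlin

section
variable {m ι β : Type*} [Fintype m] [Fintype ι] [Fintype β]

theorem hasFDerivAt_sum_sq_residual (X : Matrix m β ℝ) (D : Matrix m ι ℝ)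
    (φ : ι → β → ℝ → ℝ) (φ' : Matrix ι β ℝ) (α : ι → ℝ)
    (hφ : ∀ k b, HasDerivAt (φ k b) (φ' k b) (α k)) :
    HasFDerivAt (fun a : ι → ℝ => ∑ r, ∑ b, (X r b - ∑ k, D r k * φ k b (a k)) ^ 2)
      (∑ k, (-2 * ∑ b, (Dᵀ * (X - D * of fun k b => φ k b (α k))) k b * φ' k b) •
        (ContinuousLinearMap.proj k : (ι → ℝ) →L[ℝ] ℝ)) α := by
  have hresidual : ∀ r b, HasFDerivAt (fun a : ι → ℝ => X r b - ∑ k, D r k * φ k b (a k))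
      (-∑ k, D r k • φ' k b • (ContinuousLinearMap.proj k : (ι → ℝ) →L[ℝ] ℝ)) α := fun r b =>
    (HasFDerivAt.fun_sum fun k _ =>
      ((hφ k b).comp_hasFDerivAt α (hasFDerivAt_apply k α)).const_mul (D r k)).const_sub _
  refine (HasFDerivAt.fun_sum fun r _ => HasFDerivAt.fun_sum fun b _ =>
    (hresidual r b).pow 2).congr_fderiv ?_
  ext h
  simp only [Nat.add_one_sub_one, pow_one, nsmul_eq_mul, Nat.cast_ofNat, smul_neg,
    Finset.sum_neg_distrib, _root_.neg_apply, _root_.sum_apply, _root_.smul_apply,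
    ContinuousLinearMap.proj_apply, smul_eq_mul, Finset.mul_sum, Matrix.mul_apply, transpose_apply,
    Matrix.sub_apply, of_apply, Finset.sum_mul, neg_mul, neg_inj]
  rw [Finset.sum_comm]
  conv_rhs => rw [Finset.sum_comm]
  refine Finset.sum_congr rfl fun b _ => ?_
  rw [Finset.sum_comm]
  exact Finset.sum_congr rfl fun k _ => Finset.sum_congr rfl fun r _ => by ring
end

theorem hasFDerivAt_loss_wrt_alpha_general (B n q : ℕ)
    (X Y : Matrix (Fin n) (Fin B) ℝ)
    (D : Matrix (Fin n) (Fin q) ℝ) (E : Matrix (Fin q) (Fin n) ℝ)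
    (α : Fin q → ℝ)
    (hnd : ∀ (k : Fin q) (b : Fin B), |(E * Y) k b| ≠ Real.exp (α k))
    (Z : Matrix (Fin q) (Fin B) ℝ)
    (hZ : ∀ (k : Fin q) (b : Fin B),
      Z k b = Real.sign ((E * Y) k b) * max (|(E * Y) k b| - Real.exp (α k)) 0) :
    ∃ f : (Fin q → ℝ) →L[ℝ] ℝ,
      (∀ h : Fin q → ℝ,
        f h = ∑ k : Fin q,
          ((2 / (B : ℝ)) * ∑ b : Fin B,
            (Dᵀ * (X - D * Z)) k b * Real.exp (α k) * Real.sign (Z k b)) * h k) ∧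
      HasFDerivAt
        (fun a : Fin q → ℝ =>
          (1 / (B : ℝ)) * ∑ r : Fin n, ∑ b : Fin B,
            (X r b - ∑ k : Fin q,
              D r k * (Real.sign ((E * Y) k b)
                * max (|(E * Y) k b| - Real.exp (a k)) 0)) ^ 2)
        f α := by
  obtain rfl : Z = of fun k b => softThreshold (Real.exp (α k)) ((E * Y) k b) := Matrix.ext hZ
  have hcode : ∀ k b, HasDerivAt (fun t => softThreshold (Real.exp t) ((E * Y) k b))
      (-Real.sign (softThreshold (Real.exp (α k)) ((E * Y) k b)) * Real.exp (α k)) (α k) :=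
    fun k b => (hasDerivAt_softThreshold_threshold (hnd k b)).comp (α k) (Real.hasDerivAt_exp _)
  refine ⟨_, fun h => ?_, (hasFDerivAt_sum_sq_residual X D
    (fun k b t => softThreshold (Real.exp t) ((E * Y) k b))
    (of fun k b => -Real.sign (softThreshold (Real.exp (α k)) ((E * Y) k b)) * Real.exp (α k))
    α hcode).const_mul (1 / (B : ℝ))⟩
  simp only [one_div, neg_mul, of_apply, mul_neg, Finset.sum_neg_distrib, Finset.mul_sum, neg_neg,
    _root_.smul_apply, _root_.sum_apply, ContinuousLinearMap.proj_apply,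
    smul_eq_mul, Finset.sum_mul]
  exact Finset.sum_congr rfl fun k _ => Finset.sum_congr rfl fun b _ => by ring

/-- Derivative of the mini-batch training loss with respect to the thresholding
exponents `α`: under the nondegeneracy condition `|EY| ≠ exp(α)`, the loss is
differentiable at `α` with gradient `(2/B){Dᵀ(X − DZ) ⊙ exp(α1ᵀ) ⊙ sign(Z)}1`. -/
theorem hasFDerivAt_loss_wrt_alpha (B n q : ℕ) (hB : 1 ≤ B) (hn : 1 ≤ n) (hq : 1 ≤ q)
    (X Y : Matrix (Fin n) (Fin B) ℝ)
    (D : Matrix (Fin n) (Fin q) ℝ) (E : Matrix (Fin q) (Fin n) ℝ)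
    (α : Fin q → ℝ)
    (hnd : ∀ (k : Fin q) (b : Fin B), |(E * Y) k b| ≠ Real.exp (α k))
    (Z : Matrix (Fin q) (Fin B) ℝ)
    (hZ : ∀ (k : Fin q) (b : Fin B),
      Z k b = Real.sign ((E * Y) k b) * max (|(E * Y) k b| - Real.exp (α k)) 0) :
    ∃ f : (Fin q → ℝ) →L[ℝ] ℝ,
      (∀ h : Fin q → ℝ,
        f h = ∑ k : Fin q,
          ((2 / (B : ℝ)) * ∑ b : Fin B,
            (Dᵀ * (X - D * Z)) k b * Real.exp (α k) * Real.sign (Z k b)) * h k) ∧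
      HasFDerivAt
        (fun a : Fin q → ℝ =>
          (1 / (B : ℝ)) * ∑ r : Fin n, ∑ b : Fin B,
            (X r b - ∑ k : Fin q,
              D r k * (Real.sign ((E * Y) k b)
                * max (|(E * Y) k b| - Real.exp (a k)) 0)) ^ 2)
        f α :=
  hasFDerivAt_loss_wrt_alpha_general B n q X Y D E α hnd Z hZ
end
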